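/- arXiv:1304.6593 — 2 statements merged into one kernel-verified Lean document; each statement's English description precedes it below -/
import Mathlib

section
/- Let (V,E) be a multigraph and F a finite multiset of unordered pairs of distinct nodes of V such that (V, E ∪ F) is 2-edge-connected. Suppose F contains two parallel links e₁ and e₂, both with endpoints x and y, and suppose x and y lie in the same connected component of (V,E). Then (V, E ∪ (F minus one copy of e₁)) is also 2-edge-connected. -/
open scoped Classical

/-- The number of edges of the edge multiset `Es` (counted with multiplicity)
with exactly one endpoint in `X`. -/
noncomputable def cutDeg {V : Type*} (Es : Multiset (Sym2 V)) (X : Finset V) : ℕ :=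
  Multiset.card (Es.filter (fun e => ∃ u v, e = s(u, v) ∧ u ∈ X ∧ v ∉ X))

/-- The multigraph `(V, Es)` is `k`-edge-connected. -/
def KEdgeConnected {V : Type*} [Fintype V] (Es : Multiset (Sym2 V)) (k : ℕ) : Prop :=
  2 ≤ Fintype.card V ∧
    ∀ X : Finset V, X ≠ ∅ → X ≠ Finset.univ → k ≤ cutDeg Es X

/-- The simple graph underlying a multiset of edges: `u` and `v` are adjacent iff they
are distinct and joined by at least one edge. -/
def toSimple {V : Type*} (Es : Multiset (Sym2 V)) : SimpleGraph V where
  Adj u v := u ≠ v ∧ s(u, v) ∈ Es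
  symm := by
    constructor
    intro u v h
    exact ⟨h.1.symm, by rw [Sym2.eq_swap]; exact h.2⟩
  loopless := by constructor; intro v h; exact h.1 rfl

/-!
Removing one copy of `xy` only lowers the degree of cuts that separate `x` from `y`. Such a
cut is still crossed by the other copy of `xy` and by an edge of an `E`-path from `x` to `y`.
-/

section Cut

variable {V : Type*} (X : Finset V)

def Crosses (e : Sym2 V) : Prop :=
  ∃ u v, e = s(u, v) ∧ u ∈ X ∧ v ∉ X

lemma cutDeg_eq_card_filter_crosses (Es : Multiset (Sym2 V)) :
    cutDeg Es X = Multiset.card (Es.filter (Crosses X)) :=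
  rfl

lemma cutDeg_add (A B : Multiset (Sym2 V)) :
    cutDeg (A + B) X = cutDeg A X + cutDeg B X := by
  simp only [cutDeg_eq_card_filter_crosses, Multiset.filter_add, Multiset.card_add]

lemma cutDeg_cons_of_not_crosses {e : Sym2 V} (A : Multiset (Sym2 V)) (he : ¬ Crosses X e) :
    cutDeg (e ::ₘ A) X = cutDeg A X := by
  simp only [cutDeg_eq_card_filter_crosses, Multiset.filter_cons_of_neg _ he]

lemma one_le_cutDeg_of_mem {A : Multiset (Sym2 V)} {e : Sym2 V} (he : e ∈ A)
    (hcross : Crosses X e) : 1 ≤ cutDeg A X :=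
  Multiset.card_pos_iff_exists_mem.mpr ⟨e, Multiset.mem_filter.mpr ⟨he, hcross⟩⟩

lemma one_le_cutDeg_of_reachable {E : Multiset (Sym2 V)} {a b : V}
    (hab : (toSimple E).Reachable a b) (ha : a ∈ X) (hb : b ∉ X) : 1 ≤ cutDeg E X := by
  obtain ⟨d, -, hd, hd'⟩ := hab.some.exists_boundary_dart (X : Set V) ha hb
  exact one_le_cutDeg_of_mem X d.adj.2 ⟨d.fst, d.snd, rfl, hd, hd'⟩

lemma one_le_cutDeg_of_reachable_of_crosses {E : Multiset (Sym2 V)} {x y : V}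
    (hxy : (toSimple E).Reachable x y) (hcross : Crosses X s(x, y)) : 1 ≤ cutDeg E X := by
  obtain ⟨u, v, huv, hu, hv⟩ := hcross
  rcases Sym2.eq_iff.mp huv with ⟨rfl, rfl⟩ | ⟨rfl, rfl⟩
  · exact one_le_cutDeg_of_reachable X hxy hu hv
  · exact one_le_cutDeg_of_reachable X hxy.symm hu hv

end Cut

theorem twoEdgeConnected_erase_parallel_same_component_general
    {V : Type*} [Fintype V] [DecidableEq V]
    (E F : Multiset (Sym2 V))
    (x y : V) (hcount : 2 ≤ F.count s(x, y))
    (hreach : (toSimple E).Reachable x y)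
    (h2ec : KEdgeConnected (E + F) 2) :
    KEdgeConnected (E + F.erase s(x, y)) 2 := by
  have hmem : s(x, y) ∈ F.erase s(x, y) := by
    rw [← Multiset.count_pos, Multiset.count_erase_self]
    omega
  have hF : F = s(x, y) ::ₘ F.erase s(x, y) :=
    (Multiset.cons_erase (Multiset.mem_of_mem_erase hmem)).symm
  refine ⟨h2ec.1, fun X hX hX' => ?_⟩
  rw [cutDeg_add]
  by_cases hcross : Crosses X s(x, y)
  · -- the remaining copy of the link and an `E`-path from `x` to `y` both cross the cut
    have hE := one_le_cutDeg_of_reachable_of_crosses X hreach hcross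
    have hF' := one_le_cutDeg_of_mem X hmem hcross
    omega
  · have h := h2ec.2 X hX hX'
    rwa [cutDeg_add, hF, cutDeg_cons_of_not_crosses X _ hcross] at h

/-- If `(V, E ∪ F)` is 2-edge-connected and `F` contains two parallel links with
endpoints `x` and `y` lying in the same connected component of `(V, E)`, then removing
one copy of this link keeps the graph 2-edge-connected. -/
theorem twoEdgeConnected_erase_parallel_same_component
    {V : Type*} [Fintype V] [DecidableEq V]
    (E F : Multiset (Sym2 V))
    (hE : ∀ e ∈ E, ¬ e.IsDiag) (hF : ∀ e ∈ F, ¬ e.IsDiag)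
    (x y : V) (hxy : x ≠ y) (hcount : 2 ≤ F.count s(x, y))
    (hreach : (toSimple E).Reachable x y)
    (h2ec : KEdgeConnected (E + F) 2) :
    KEdgeConnected (E + F.erase s(x, y)) 2 :=
  twoEdgeConnected_erase_parallel_same_component_general E F x y hcount hreach h2ec
end

section
/- Let (V,E) be a multigraph with |V| ≥ 2 and let λ = min { d_E(X) : ∅ ≠ X ⊊ V } be its minimum cut value, and suppose λ is odd. Then the family of minimum cuts is cross-free: for any X, Y with d_E(X) = d_E(Y) = λ, at least one of the following holds: X ⊆ Y, Y ⊆ X, X ∩ Y = ∅, or X ∪ Y = V. -/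
open scoped Classical

/-!
Write `d` for `cutDeg E` and `e(P, Q)` for the number of edges between `P` and `Q`. Counting
edge by edge gives submodularity `d X + d Y = d (X ∩ Y) + d (X ∪ Y) + 2 e(X \ Y, Y \ X)` and,
applied to `X` and `Yᶜ`, posimodularity
`d X + d Y = d (X \ Y) + d (Y \ X) + 2 e(X ∩ Y, (X ∪ Y)ᶜ)`.
If two minimum cuts `X`, `Y` cross, all four corners are proper nonempty sets, so both identities
force `X ∩ Y` and `X \ Y` to be minimum cuts. Since `X` is their disjoint union,
`λ + λ = λ + 2 e(X ∩ Y, X \ Y)`, so `λ` is even.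
-/

theorem Sym2.exists_mk_eq_mk_and_iff {α : Type*} (a b : α) (p : α → α → Prop) :
    (∃ u v, s(a, b) = s(u, v) ∧ p u v) ↔ p a b ∨ p b a := by
  simp [or_and_right, exists_or]

theorem Multiset.card_filter_eq_sum_map_ite {α : Type*} (s : Multiset α) (p : α → Prop)
    [DecidablePred p] : card (s.filter p) = (s.map fun a => if p a then 1 else 0).sum := by
  induction s using Multiset.induction with
  | empty => rfl
  | cons a s ih => by_cases h : p a <;> simp [h, ih, add_comm]

theorem Finset.ne_univ_of_disjoint {α : Type*} [Fintype α] {s t : Finset α} (ht : t.Nonempty)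
    (h : Disjoint s t) : s ≠ univ := by
  rintro rfl
  obtain ⟨a, ha⟩ := ht
  exact Finset.disjoint_left.1 h (mem_univ a) ha

section Cuts

variable {V : Type*}

noncomputable def edgesBetween (E : Multiset (Sym2 V)) (P Q : Finset V) : ℕ :=
  Multiset.card (E.filter (fun e => ∃ u v, e = s(u, v) ∧ u ∈ P ∧ v ∈ Q))

@[simp]
theorem cutDeg_empty (E : Multiset (Sym2 V)) : cutDeg E ∅ = 0 := by
  simp [cutDeg]

variable [DecidableEq V]

theorem cutDeg_compl [Fintype V] (E : Multiset (Sym2 V)) (X : Finset V) :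
    cutDeg E Xᶜ = cutDeg E X := by
  simp only [cutDeg, Multiset.card_filter_eq_sum_map_ite]
  refine congrArg Multiset.sum (Multiset.map_congr rfl fun e _ => ?_)
  induction e using Sym2.ind with
  | _ a b =>
    simp only [Sym2.exists_mk_eq_mk_and_iff, Finset.mem_compl]
    by_cases a ∈ X <;> by_cases b ∈ X <;> simp [*]

theorem cutDeg_add_cutDeg (E : Multiset (Sym2 V)) (X Y : Finset V) :
    cutDeg E X + cutDeg E Y =
      cutDeg E (X ∩ Y) + cutDeg E (X ∪ Y) + 2 * edgesBetween E (X \ Y) (Y \ X) := by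
  simp only [cutDeg, edgesBetween, Multiset.card_filter_eq_sum_map_ite, ← Multiset.sum_map_add,
    ← Multiset.sum_map_mul_left]
  congr 1
  refine Multiset.map_congr rfl fun e _ => ?_
  induction e using Sym2.ind with
  | _ a b =>
    simp only [Sym2.exists_mk_eq_mk_and_iff, Finset.mem_inter, Finset.mem_union,
      Finset.mem_sdiff]
    by_cases a ∈ X <;> by_cases b ∈ X <;> by_cases a ∈ Y <;> by_cases b ∈ Y <;> simp [*]

theorem cutDeg_add_cutDeg_of_disjoint (E : Multiset (Sym2 V)) {X Y : Finset V}
    (h : Disjoint X Y) :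
    cutDeg E X + cutDeg E Y = cutDeg E (X ∪ Y) + 2 * edgesBetween E X Y := by
  rw [cutDeg_add_cutDeg, Finset.disjoint_iff_inter_eq_empty.1 h,
    Finset.sdiff_eq_self_of_disjoint h, Finset.sdiff_eq_self_of_disjoint h.symm, cutDeg_empty,
    zero_add]

theorem cutDeg_add_cutDeg_eq_sdiff [Fintype V] (E : Multiset (Sym2 V)) (X Y : Finset V) :
    cutDeg E X + cutDeg E Y =
      cutDeg E (X \ Y) + cutDeg E (Y \ X) + 2 * edgesBetween E (X ∩ Y) (X ∪ Y)ᶜ := by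
  have h := cutDeg_add_cutDeg E X Yᶜ
  rw [cutDeg_compl, ← cutDeg_compl E (X ∪ Yᶜ)] at h
  have h₁ : X ∩ Yᶜ = X \ Y := by ext; simp
  have h₂ : (X ∪ Yᶜ)ᶜ = Y \ X := by ext; simp [and_comm]
  have h₃ : X \ Yᶜ = X ∩ Y := by ext; simp
  have h₄ : Yᶜ \ X = (X ∪ Y)ᶜ := by ext; simp [and_comm]
  rwa [h₁, h₂, h₃, h₄] at h

end Cuts

section MinCuts

variable {V : Type*} [Fintype V] [DecidableEq V] {E : Multiset (Sym2 V)} {lam : ℕ}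
  {X Y : Finset V}

theorem cutDeg_inter_eq_of_crossing
    (hmin : ∀ Z : Finset V, Z.Nonempty → Z ≠ Finset.univ → lam ≤ cutDeg E Z)
    (hX : cutDeg E X = lam) (hY : cutDeg E Y = lam) (hXY : (X ∩ Y).Nonempty)
    (hunion : X ∪ Y ≠ Finset.univ) : cutDeg E (X ∩ Y) = lam := by
  have h_inter := hmin _ hXY <| Finset.ssubset_univ_iff.1 <|
    Finset.inter_subset_union.trans_ssubset (Finset.ssubset_univ_iff.2 hunion)
  have h_union := hmin _ (hXY.mono Finset.inter_subset_union) hunion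
  have := cutDeg_add_cutDeg E X Y
  omega

theorem cutDeg_sdiff_eq_of_crossing
    (hmin : ∀ Z : Finset V, Z.Nonempty → Z ≠ Finset.univ → lam ≤ cutDeg E Z)
    (hX : cutDeg E X = lam) (hY : cutDeg E Y = lam) (hXY : (X \ Y).Nonempty)
    (hYX : (Y \ X).Nonempty) : cutDeg E (X \ Y) = lam := by
  have h_XY := hmin _ hXY (Finset.ne_univ_of_disjoint hYX disjoint_sdiff_sdiff)
  have h_YX := hmin _ hYX (Finset.ne_univ_of_disjoint hXY disjoint_sdiff_sdiff)
  have := cutDeg_add_cutDeg_eq_sdiff E X Y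
  omega

end MinCuts

theorem minCuts_crossFree_of_odd_general {V : Type*} [Fintype V] [DecidableEq V]
    (E : Multiset (Sym2 V)) (lam : ℕ)
    (hlam : IsLeast {n : ℕ | ∃ X : Finset V, X ≠ ∅ ∧ X ≠ Finset.univ ∧
      cutDeg E X = n} lam)
    (hodd : Odd lam)
    (X Y : Finset V) (hX : cutDeg E X = lam) (hY : cutDeg E Y = lam) :
    X ⊆ Y ∨ Y ⊆ X ∨ X ∩ Y = ∅ ∨ X ∪ Y = Finset.univ := by
  have hmin : ∀ Z : Finset V, Z.Nonempty → Z ≠ Finset.univ → lam ≤ cutDeg E Z :=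
    fun Z hZ hZ' => hlam.2 ⟨Z, hZ.ne_empty, hZ', rfl⟩
  by_contra! hcross
  obtain ⟨hXY, hYX, hinter, hunion⟩ := hcross
  have h_inter := cutDeg_inter_eq_of_crossing hmin hX hY hinter hunion
  have h_sdiff := cutDeg_sdiff_eq_of_crossing hmin hX hY
    (Finset.sdiff_nonempty.2 hXY) (Finset.sdiff_nonempty.2 hYX)
  have h_split := cutDeg_add_cutDeg_of_disjoint E (Finset.disjoint_sdiff_inter X Y)
  rw [Finset.sdiff_union_inter] at h_split
  obtain ⟨k, hk⟩ := hodd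
  omega

/-- If the minimum cut value `lam` of a multigraph is odd, then the family of minimum
cuts is cross-free: any two minimum cuts `X`, `Y` satisfy `X ⊆ Y`, `Y ⊆ X`,
`X ∩ Y = ∅` or `X ∪ Y = V`. -/
theorem minCuts_crossFree_of_odd {V : Type*} [Fintype V] [DecidableEq V]
    (E : Multiset (Sym2 V)) (hE : ∀ e ∈ E, ¬ e.IsDiag)
    (hV : 2 ≤ Fintype.card V) (lam : ℕ)
    (hlam : IsLeast {n : ℕ | ∃ X : Finset V, X ≠ ∅ ∧ X ≠ Finset.univ ∧
      cutDeg E X = n} lam)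
    (hodd : Odd lam)
    (X Y : Finset V) (hX : cutDeg E X = lam) (hY : cutDeg E Y = lam) :
    X ⊆ Y ∨ Y ⊆ X ∨ X ∩ Y = ∅ ∨ X ∪ Y = Finset.univ :=
  minCuts_crossFree_of_odd_general E lam hlam hodd X Y hX hY
end
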